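/- arXiv:2602.19469 — 2 statements merged into one kernel-verified Lean document; each statement's English description precedes it below -/
import Mathlib

section
/- Let q ≥ 2, θ₁ := exp(2πi/q). Let (X_a)_{a=0}^{q−1} be independent real random variables each distributed N(0, 1/q) and M_j := X_j − (1/q) Σ_b X_b. For w = (w_1,…,w_{q−1}) ∈ ℂ^{q−1} set S_j(w) := Σ_{k=1}^{q−1} w_k θ₁^{jk} for j = 0,…,q−1, and define G(M, w) := exp( −(1/(2q)) Σ_{j=0}^{q−1} S_j(w)² + Σ_{j=0}^{q−1} M_j S_j(w) ). Then for every ω ∈ ℝ^q, E[ e^{i Σ_a ω_a M_a} · G(M, w) ] = E[ e^{i Σ_a ω_a M_a} ] · exp( (i/q) Σ_{k=1}^{q−1} ( Σ_{a=0}^{q−1} ω_a θ₁^{ak} ) w_k ), where E[ e^{i Σ_a ω_a M_a} ] = exp( −(1/(2q)) Σ_a ω_a² + (1/(2q²)) (Σ_a ω_a)² ). -/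
/-!
`M` is a linear image of the i.i.d. Gaussian vector `X`: for complex coefficients `c`,
`∑ cₐ Mₐ = ∑ (cₐ - c̄) Xₐ`, so `E[exp (∑ cₐ Mₐ)] = exp ((1/2q) ∑ (cₐ - c̄)²)`.
Up to the constant factor `exp (-(1/2q) ∑ Sⱼ(w)²)`, the integrand on the left is such an exponential
with `c = iω + S(w)`. The `Sⱼ(w)` only involve non-trivial `q`-th roots of unity, so `∑ⱼ Sⱼ(w) = 0`:
shifting by `S(w)` leaves the mean of `c` unchanged, and after expanding the square the `∑ Sⱼ²`
terms cancel, leaving the cross term `(i/q) ∑ₐ ωₐ Sₐ(w)`, which is the claimed exponent.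
-/

open MeasureTheory ProbabilityTheory Finset
open scoped NNReal

section CenteredSumSq

variable {𝕜 ι : Type*} [Field 𝕜] [Fintype ι]

def centeredSumSq (c : ι → 𝕜) : 𝕜 :=
  ∑ i, c i ^ 2 - (Fintype.card ι : 𝕜)⁻¹ * (∑ i, c i) ^ 2

lemma sum_mul_sub_mean (c x : ι → 𝕜) :
    ∑ i, c i * (x i - (Fintype.card ι : 𝕜)⁻¹ * ∑ j, x j)
      = ∑ i, (c i - (Fintype.card ι : 𝕜)⁻¹ * ∑ j, c j) * x i := by
  simp only [mul_sub, sub_mul, sum_sub_distrib, ← sum_mul, ← mul_sum]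
  ring

lemma sum_sub_mean_sq (c : ι → 𝕜) :
    ∑ i, (c i - (Fintype.card ι : 𝕜)⁻¹ * ∑ j, c j) ^ 2 = centeredSumSq c := by
  simp only [centeredSumSq, sub_sq, sum_add_distrib, sum_sub_distrib, sum_const, card_univ,
    nsmul_eq_mul, ← sum_mul, ← mul_sum]
  rcases eq_or_ne (Fintype.card ι : 𝕜) 0 with h | h
  · simp [h]
  · field_simp
    ring

lemma centeredSumSq_add_of_sum_eq_zero (c s : ι → 𝕜) (hs : ∑ i, s i = 0) :
    centeredSumSq (fun i => c i + s i)
      = centeredSumSq c + 2 * ∑ i, c i * s i + ∑ i, s i ^ 2 := by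
  have hsq : ∑ i, (c i + s i) ^ 2 = ∑ i, c i ^ 2 + 2 * ∑ i, c i * s i + ∑ i, s i ^ 2 := by
    rw [mul_sum, ← sum_add_distrib, ← sum_add_distrib]
    exact sum_congr rfl fun i _ => by ring
  rw [centeredSumSq, centeredSumSq, hsq, sum_add_distrib, hs, add_zero]
  ring

end CenteredSumSq

lemma IsPrimitiveRoot.sum_pow_mul_eq_zero {R : Type*} [CommRing R] [IsDomain R] {ζ : R} {n m : ℕ}
    (hζ : IsPrimitiveRoot ζ n) (hm0 : m ≠ 0) (hmn : m < n) :
    ∑ j : Fin n, ζ ^ ((j : ℕ) * m) = 0 := by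
  have hpow : (ζ ^ m) ^ n = 1 := by rw [← pow_mul, mul_comm, pow_mul, hζ.pow_eq_one, one_pow]
  have hne : ζ ^ m - 1 ≠ 0 := sub_ne_zero.mpr (hζ.pow_ne_one_of_pos_of_lt hm0 hmn)
  have hgeom : (∑ j ∈ range n, (ζ ^ m) ^ j) * (ζ ^ m - 1) = 0 := by
    rw [geom_sum_mul, hpow, sub_self]
  simp_rw [mul_comm _ m, pow_mul]
  rw [Fin.sum_univ_eq_sum_range (fun j => (ζ ^ m) ^ j)]
  exact (mul_eq_zero.mp hgeom).resolve_right hne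

lemma sum_sum_mul_cexp_pow_eq_zero (n : ℕ) (w : Fin (n - 1) → ℂ) :
    ∑ j : Fin n, ∑ k, w k * Complex.exp (2 * Real.pi * Complex.I / n) ^ ((j : ℕ) * ((k : ℕ) + 1))
      = 0 := by
  rw [sum_comm]
  refine sum_eq_zero fun k _ => ?_
  have hk : (k : ℕ) + 1 < n := by omega
  rw [← mul_sum, (Complex.isPrimitiveRoot_exp n (by omega)).sum_pow_mul_eq_zero
    k.val.succ_ne_zero hk, mul_zero]

section Gaussian

variable {Ω ι : Type*} [MeasurableSpace Ω] {μ : Measure Ω} [Fintype ι]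
  {X : ι → Ω → ℝ} {v : ℝ≥0}

lemma integral_cexp_sum_mul_of_iIndepFun_gaussianReal (hX : iIndepFun X μ)
    (hgauss : ∀ i, μ.map (X i) = gaussianReal 0 v) (c : ι → ℂ) :
    ∫ ω, Complex.exp (∑ i, c i * X i ω) ∂μ = Complex.exp (v / 2 * ∑ i, c i ^ 2) := by
  have hXm (i : ι) : AEMeasurable (X i) μ :=
    aemeasurable_of_map_neZero (by rw [hgauss i]; infer_instance)
  simp_rw [Complex.exp_sum, mul_sum, Complex.exp_sum]
  rw [hX.integral_fun_prod_comp (f := fun (i : ι) (x : ℝ) => Complex.exp (c i * x)) hXm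
    (fun i => by fun_prop)]
  refine prod_congr rfl fun i _ => ?_
  rw [← complexMGF, complexMGF_gaussianReal (hgauss i)]
  congr 1
  push_cast
  ring

lemma integral_cexp_sum_mul_sub_mean_of_iIndepFun_gaussianReal (hX : iIndepFun X μ)
    (hgauss : ∀ i, μ.map (X i) = gaussianReal 0 v) (c : ι → ℂ) :
    ∫ ω, Complex.exp (∑ i, c i * (X i ω - (Fintype.card ι : ℂ)⁻¹ * ∑ j, (X j ω : ℂ))) ∂μ
      = Complex.exp (v / 2 * centeredSumSq c) := by
  simp_rw [sum_mul_sub_mean]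
  rw [integral_cexp_sum_mul_of_iIndepFun_gaussianReal hX hgauss, sum_sub_mean_sq]

end Gaussian

theorem statement14_general (q : ℕ)
    {Ω : Type} [MeasurableSpace Ω] (μ : Measure Ω)
    (X : Fin q → Ω → ℝ)
    (hindep : iIndepFun X μ)
    (hgauss : ∀ a, Measure.map (X a) μ = gaussianReal 0 ((q : NNReal))⁻¹) :
    let θ₁ : ℂ := Complex.exp (2 * Real.pi * Complex.I / q)
    let M : Fin q → Ω → ℝ := fun a ω => X a ω - (1 / (q : ℝ)) * ∑ b, X b ω
    let S : Fin q → (Fin (q - 1) → ℂ) → ℂ := fun j w =>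
      ∑ k, w k * θ₁ ^ ((j : ℕ) * ((k : ℕ) + 1))
    let Gfun : (Fin q → ℝ) → (Fin (q - 1) → ℂ) → ℂ := fun m w =>
      Complex.exp (-(1 / (2 * (q : ℂ))) * ∑ j, (S j w) ^ 2
        + ∑ j, (m j : ℂ) * S j w)
    ∀ (w : Fin (q - 1) → ℂ) (v : Fin q → ℝ),
      ((∫ ω, Complex.exp (Complex.I * ∑ a, (v a : ℂ) * (M a ω : ℂ))
            * Gfun (fun j => M j ω) w ∂μ)
        = (∫ ω, Complex.exp (Complex.I * ∑ a, (v a : ℂ) * (M a ω : ℂ)) ∂μ)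
          * Complex.exp ((Complex.I / (q : ℂ)) *
              ∑ k : Fin (q - 1), (∑ a : Fin q, (v a : ℂ)
                * θ₁ ^ ((a : ℕ) * ((k : ℕ) + 1))) * w k)) ∧
      ((∫ ω, Complex.exp (Complex.I * ∑ a, (v a : ℂ) * (M a ω : ℂ)) ∂μ)
        = Complex.exp (-(1 / (2 * (q : ℂ))) * ∑ a, (v a : ℂ) ^ 2
            + (1 / (2 * (q : ℂ) ^ 2)) * (∑ a, (v a : ℂ)) ^ 2)) := by
  intro θ₁ M S Gfun w v
  have hmgf (c : Fin q → ℂ) : ∫ ω, Complex.exp (∑ a, c a * (M a ω : ℂ)) ∂μ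
      = Complex.exp ((q : ℂ)⁻¹ / 2 * centeredSumSq c) := by
    have h := integral_cexp_sum_mul_sub_mean_of_iIndepFun_gaussianReal hindep hgauss c
    push_cast [Fintype.card_fin] at h
    simpa [M, one_div] using h
  have hS : ∑ j, S j w = 0 := sum_sum_mul_cexp_pow_eq_zero q w
  have hvS : ∑ a, (v a : ℂ) * S a w
      = ∑ k : Fin (q - 1), (∑ a : Fin q, (v a : ℂ) * θ₁ ^ ((a : ℕ) * ((k : ℕ) + 1))) * w k := by
    simp only [S, mul_sum, sum_mul]
    rw [sum_comm]
    exact sum_congr rfl fun k _ => sum_congr rfl fun a _ => by ring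
  have hcf := hmgf (fun a => Complex.I * v a)
  simp only [mul_assoc, ← mul_sum] at hcf
  refine ⟨?_, ?_⟩
  · have hsplit (ω : Ω) : Complex.exp (Complex.I * ∑ a, (v a : ℂ) * (M a ω : ℂ))
          * Gfun (fun j => M j ω) w
        = Complex.exp (-(1 / (2 * (q : ℂ))) * ∑ j, (S j w) ^ 2)
          * Complex.exp (∑ a, (Complex.I * v a + S a w) * (M a ω : ℂ)) := by
      simp only [Gfun, ← Complex.exp_add, add_mul, sum_add_distrib, mul_sum, mul_assoc,
        mul_comm (S _ w)]
      ring_nf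
    simp_rw [hsplit]
    rw [integral_const_mul, hmgf, hcf, centeredSumSq_add_of_sum_eq_zero _ _ hS, ← Complex.exp_add,
      ← Complex.exp_add]
    simp only [mul_assoc, ← mul_sum, hvS]
    congr 1
    ring
  · rw [hcf]
    congr 1
    simp only [centeredSumSq, Fintype.card_fin, ← mul_sum, mul_pow, Complex.I_sq, neg_one_mul,
      sum_neg_distrib]
    ring

/-- Transform of the generating function of the limiting multivariate
Krawtchouk polynomials: for the singular Gaussian `M` with `Cov(M_a,M_b)=(1/q)(δ_{ab}−1/q)`
and `G(M,w) = exp(−(1/(2q)) Σ_j S_j(w)² + Σ_j M_j S_j(w))`, `S_j(w)=Σ_k w_k θ₁^{jk}`,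
`E[e^{iω·M} G(M,w)] = E[e^{iω·M}] · exp((i/q) Σ_k (Σ_a ω_a θ₁^{ak}) w_k)`. -/
theorem statement14 (q : ℕ) (hq : 2 ≤ q)
    {Ω : Type} [MeasurableSpace Ω] (μ : Measure Ω) [IsProbabilityMeasure μ]
    (X : Fin q → Ω → ℝ)
    (hindep : iIndepFun X μ)
    (hgauss : ∀ a, Measure.map (X a) μ = gaussianReal 0 ((q : NNReal))⁻¹) :
    let θ₁ : ℂ := Complex.exp (2 * Real.pi * Complex.I / q)
    let M : Fin q → Ω → ℝ := fun a ω => X a ω - (1 / (q : ℝ)) * ∑ b, X b ω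
    let S : Fin q → (Fin (q - 1) → ℂ) → ℂ := fun j w =>
      ∑ k, w k * θ₁ ^ ((j : ℕ) * ((k : ℕ) + 1))
    let Gfun : (Fin q → ℝ) → (Fin (q - 1) → ℂ) → ℂ := fun m w =>
      Complex.exp (-(1 / (2 * (q : ℂ))) * ∑ j, (S j w) ^ 2
        + ∑ j, (m j : ℂ) * S j w)
    ∀ (w : Fin (q - 1) → ℂ) (v : Fin q → ℝ),
      ((∫ ω, Complex.exp (Complex.I * ∑ a, (v a : ℂ) * (M a ω : ℂ))
            * Gfun (fun j => M j ω) w ∂μ)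
        = (∫ ω, Complex.exp (Complex.I * ∑ a, (v a : ℂ) * (M a ω : ℂ)) ∂μ)
          * Complex.exp ((Complex.I / (q : ℂ)) *
              ∑ k : Fin (q - 1), (∑ a : Fin q, (v a : ℂ)
                * θ₁ ^ ((a : ℕ) * ((k : ℕ) + 1))) * w k)) ∧
      ((∫ ω, Complex.exp (Complex.I * ∑ a, (v a : ℂ) * (M a ω : ℂ)) ∂μ)
        = Complex.exp (-(1 / (2 * (q : ℂ))) * ∑ a, (v a : ℂ) ^ 2
            + (1 / (2 * (q : ℂ) ^ 2)) * (∑ a, (v a : ℂ)) ^ 2)) :=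
  statement14_general q μ X hindep hgauss
end

section
/- Let q ≥ 2, d ≥ 1, θ₁ := exp(2πi/q). For m = (m_0,…,m_{q−1}) ∈ ℕ^q with m_0 + ⋯ + m_{q−1} = d and l = (l_1,…,l_{q−1}) ∈ ℕ^{q−1}, define Q_l(m) ∈ ℂ as the coefficient of the monomial w_1^{l_1} ⋯ w_{q−1}^{l_{q−1}} in the polynomial Π_{j=0}^{q−1} ( 1 + Σ_{k=1}^{q−1} w_k θ₁^{jk} )^{m_j} in commuting variables w_1,…,w_{q−1} over ℂ. Then for all l, l' ∈ ℕ^{q−1} with |l| := l_1+⋯+l_{q−1} ≤ d and |l'| ≤ d, Σ_{m ∈ ℕ^q : m_0+⋯+m_{q−1}=d} (d! / (m_0! ⋯ m_{q−1}!)) q^{-d} · Q_l(m) · conj(Q_{l'}(m)) = 𝟙{l = l'} · d! / ( (d − |l|)! · l_1! ⋯ l_{q−1}! ). -/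
/-!
Write `G_j(w) = 1 + Σ_k w_k θ^{jk}` for the factor of the generating function belonging to the
symbol `j`. Putting `Q_l` and `conj Q_{l'}` in disjoint sets of variables `w` and `z`, the
product `Q_l(m) conj Q_{l'}(m)` is the coefficient of `w^l z^{l'}` in `Π_j (G_j(w) conj G_j(z))^{m_j}`,
so by the multinomial theorem the left-hand side is `q^{-d}` times the coefficient of `w^l z^{l'}`
in `(Σ_j G_j(w) conj G_j(z))^d`. Orthogonality of the characters `j ↦ θ^{jk}` of `ℤ/q` collapses
`Σ_j G_j(w) conj G_j(z)` to `q (1 + Σ_k w_k z_k)`, and the coefficient of `w^l z^{l'}` in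
`(1 + Σ_k w_k z_k)^d` is `δ_{l l'}` times the multinomial coefficient `d! / ((d - |l|)! Π_k l_k!)`.
-/

open Finset MvPolynomial

theorem IsPrimitiveRoot.sum_pow_mul_inv_pow_eq_ite {K : Type*} [Field K] {θ : K} {q : ℕ}
    (hθ : IsPrimitiveRoot θ q) {a b : ℕ} (ha : a < q) (hb : b < q) :
    ∑ j ∈ range q, θ ^ (j * a) * θ⁻¹ ^ (j * b) = if a = b then (q : K) else 0 := by
  have hθ₀ : θ ≠ 0 := hθ.ne_zero (by omega)
  have hpow (j : ℕ) : θ ^ (j * a) * θ⁻¹ ^ (j * b) = (θ ^ a * θ⁻¹ ^ b) ^ j := by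
    rw [mul_pow, ← pow_mul, ← pow_mul, mul_comm a, mul_comm b]
  simp_rw [hpow]
  split_ifs with hab
  · simp [hab, hθ₀]
  · have hζ : θ ^ a * θ⁻¹ ^ b ≠ 1 := by
      rw [inv_pow, ← div_eq_mul_inv, ne_eq, div_eq_one_iff_eq (pow_ne_zero _ hθ₀)]
      exact fun h => hab (hθ.pow_inj ha hb h)
    have hζq : (θ ^ a * θ⁻¹ ^ b) ^ q = 1 := by
      rw [mul_pow, ← pow_mul, ← pow_mul, mul_comm a, mul_comm b, pow_mul, pow_mul, inv_pow,
        hθ.pow_eq_one]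
      simp
    rw [geom_sum_eq hζ, hζq, sub_self, zero_div]

section KrawtchoukFactor

variable {K A : Type*} [CommSemiring K] [CommSemiring A] [Algebra K A] {n : ℕ}

/-- `k : Fin n` stands for the index `k + 1 ∈ {1, …, q - 1}` of the paper, with `q = n + 1`. -/
def krawtchoukFactor (θ : K) (w : Fin n → A) (j : ℕ) : A :=
  1 + ∑ k : Fin n, θ ^ (j * ((k : ℕ) + 1)) • w k

/-- Setting `w₀ = 1` turns the factor into a discrete Fourier transform of length `n + 1`. -/
theorem krawtchoukFactor_eq_sum (θ : K) (w : Fin n → A) (j : ℕ) :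
    krawtchoukFactor θ w j
      = ∑ a : Fin (n + 1), θ ^ (j * (a : ℕ)) • (Fin.cons 1 w : Fin (n + 1) → A) a := by
  simp [krawtchoukFactor, Fin.sum_univ_succ]

theorem AlgHom.map_krawtchoukFactor {B : Type*} [CommSemiring B] [Algebra K B] (φ : A →ₐ[K] B)
    (θ : K) (w : Fin n → A) (j : ℕ) :
    φ (krawtchoukFactor θ w j) = krawtchoukFactor θ (φ ∘ w) j := by
  simp [krawtchoukFactor]

theorem MvPolynomial.krawtchoukFactor_X (θ : K) (j : ℕ) :
    krawtchoukFactor θ (X : Fin n → MvPolynomial (Fin n) K) j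
      = 1 + ∑ k : Fin n, X k * C (θ ^ (j * ((k : ℕ) + 1))) := by
  simp [krawtchoukFactor, smul_eq_C_mul, mul_comm]

theorem MvPolynomial.map_krawtchoukFactor_X {L : Type*} [CommSemiring L] (f : K →+* L) (θ : K)
    (j : ℕ) :
    map f (krawtchoukFactor θ (X : Fin n → MvPolynomial (Fin n) K) j)
      = krawtchoukFactor (f θ) X j := by
  simp [krawtchoukFactor_X]

end KrawtchoukFactor

theorem IsPrimitiveRoot.sum_krawtchoukFactor_mul {K A : Type*} [Field K] [CommSemiring A]
    [Algebra K A] {n : ℕ} {θ : K} (hθ : IsPrimitiveRoot θ (n + 1)) (w w' : Fin n → A) :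
    ∑ j ∈ range (n + 1), krawtchoukFactor θ w j * krawtchoukFactor θ⁻¹ w' j
      = (n + 1 : K) • (1 + ∑ k, w k * w' k) := by
  have horth (a b : Fin (n + 1)) :
      ∑ j ∈ range (n + 1), θ ^ (j * (a : ℕ)) * θ⁻¹ ^ (j * (b : ℕ))
        = if a = b then (n + 1 : K) else 0 := by
    rw [hθ.sum_pow_mul_inv_pow_eq_ite a.isLt b.isLt]
    simp [Fin.val_inj]
  simp_rw [krawtchoukFactor_eq_sum, sum_mul_sum, smul_mul_smul_comm]
  rw [sum_comm]
  simp_rw [sum_comm (s := range (n + 1)), ← sum_smul, horth, ite_smul, zero_smul, sum_ite_eq,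
    if_pos (mem_univ _)]
  rw [← smul_sum, Fin.sum_univ_succ]
  simp

namespace MvPolynomial

variable {R σ τ : Type*} [CommSemiring R]

theorem coeff_sumElim_rename_inl_mul_rename_inr (P : MvPolynomial σ R) (P' : MvPolynomial τ R)
    (a : σ →₀ ℕ) (b : τ →₀ ℕ) :
    coeff (a.sumElim b) (rename Sum.inl P * rename Sum.inr P') = coeff a P * coeff b P' := by
  classical
  induction P using MvPolynomial.induction_on' with
  | add P₁ P₂ h₁ h₂ => simp only [map_add, add_mul, coeff_add, h₁, h₂]
  | monomial u r =>
    induction P' using MvPolynomial.induction_on' with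
    | add P₁ P₂ h₁ h₂ => simp only [map_add, mul_add, coeff_add, h₁, h₂]
    | monomial v s =>
      have hinj : u.sumElim v = a.sumElim b ↔ u = a ∧ v = b := by
        refine ⟨fun h => ⟨?_, ?_⟩, fun ⟨hu, hv⟩ => hu ▸ hv ▸ rfl⟩
        · simpa using congrArg (Finsupp.comapDomain Sum.inl · Sum.inl_injective.injOn) h
        · simpa using congrArg (Finsupp.comapDomain Sum.inr · Sum.inr_injective.injOn) h
      simp only [rename_monomial, monomial_mul, ← Finsupp.sumElim_eq_add, coeff_monomial, hinj,
        ite_zero_mul_ite_zero]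

theorem coeff_prod_krawtchoukFactor_mul_map_coeff {K : Type*} [CommSemiring K] {n q : ℕ}
    (f : K →+* K) (θ : K) (m : Fin q → ℕ) (a b : Fin n →₀ ℕ) :
    coeff a (∏ j : Fin q, krawtchoukFactor θ X j ^ m j)
        * f (coeff b (∏ j : Fin q, krawtchoukFactor θ X j ^ m j))
      = coeff (a.sumElim b) (∏ j : Fin q,
          (krawtchoukFactor θ (X ∘ Sum.inl) j * krawtchoukFactor (f θ) (X ∘ Sum.inr) j) ^ m j) := by
  rw [← coeff_map, map_prod, ← coeff_sumElim_rename_inl_mul_rename_inr]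
  simp only [map_prod, map_pow, map_krawtchoukFactor_X, AlgHom.map_krawtchoukFactor,
    ← prod_mul_distrib, ← mul_pow, Function.comp_def, rename_X]

theorem coeff_sum_pow {ι : Type*} [Fintype ι] [DecidableEq ι] (F : ι → MvPolynomial σ R)
    (μ : σ →₀ ℕ) (d : ℕ) :
    coeff μ ((∑ i, F i) ^ d)
      = ∑ c ∈ piAntidiag univ d, (Nat.multinomial univ c : R) * coeff μ (∏ i, F i ^ c i) := by
  simp only [sum_pow_eq_sum_piAntidiag, coeff_sum, ← C_eq_coe_nat, coeff_C_mul]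

theorem prod_X_pow_eq_monomial_equivFunOnFinite [Fintype σ] (f : σ → ℕ) :
    ∏ i, (X i : MvPolynomial σ R) ^ f i = monomial (Finsupp.equivFunOnFinite.symm f) 1 := by
  rw [monomial_eq, C_1, one_mul, Finsupp.prod_fintype _ _ fun i => pow_zero _]
  rfl

end MvPolynomial

theorem comp_some_eq_iff_of_mem_piAntidiag {σ : Type*} [Fintype σ] [DecidableEq σ] {d : ℕ}
    {c : Option σ → ℕ} (hc : c ∈ piAntidiag univ d) {l : σ → ℕ} :
    c ∘ some = l ↔ c = fun o => o.elim (d - ∑ k, l k) l := by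
  refine ⟨fun h => ?_, fun h => h ▸ rfl⟩
  rw [mem_piAntidiag, Fintype.sum_option] at hc
  funext o
  cases o with
  | none => simp only [← h, Function.comp_apply, Option.elim_none]; omega
  | some k => exact congrFun h k

theorem MvPolynomial.coeff_one_add_sum_X_inl_mul_X_inr_pow {R σ : Type*} [CommSemiring R]
    [Fintype σ] [DecidableEq σ] (l l' : σ → ℕ) {d : ℕ} (hl : ∑ k, l k ≤ d) :
    coeff (Finsupp.equivFunOnFinite.symm (Sum.elim l l'))
        ((1 + ∑ k, X (Sum.inl k) * X (Sum.inr k) : MvPolynomial (σ ⊕ σ) R) ^ d)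
      = if l = l' then (Nat.multinomial univ (fun o : Option σ => o.elim (d - ∑ k, l k) l) : R)
        else 0 := by
  set t : Option σ → MvPolynomial (σ ⊕ σ) R :=
    fun o => o.elim 1 fun k => X (Sum.inl k) * X (Sum.inr k)
  have hsum : (1 + ∑ k, X (Sum.inl k) * X (Sum.inr k) : MvPolynomial (σ ⊕ σ) R) = ∑ o, t o :=
    (Fintype.sum_option t).symm
  have hprod (c : Option σ → ℕ) : ∏ o, t o ^ c o
      = monomial (Finsupp.equivFunOnFinite.symm (Sum.elim (c ∘ some) (c ∘ some))) 1 := by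
    rw [← prod_X_pow_eq_monomial_equivFunOnFinite, Fintype.prod_sum_type, ← prod_mul_distrib,
      Fintype.prod_option]
    simp [t, mul_pow]
  have hc₀ : (fun o : Option σ => o.elim (d - ∑ k, l k) l) ∈ piAntidiag univ d := by
    simp [mem_piAntidiag, Fintype.sum_option, Nat.sub_add_cancel hl]
  rw [hsum, coeff_sum_pow]
  simp only [hprod, coeff_monomial, Finsupp.equivFunOnFinite.symm.injective.eq_iff,
    Sum.elim_eq_iff]
  split_ifs with hll
  · subst hll
    rw [sum_eq_single_of_mem _ hc₀ fun c hc hne => ?_]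
    · rw [if_pos ⟨rfl, rfl⟩, mul_one]
    · simp only [and_self]
      rw [if_neg (mt (comp_some_eq_iff_of_mem_piAntidiag hc).mp hne), mul_zero]
  · refine sum_eq_zero fun c _ => ?_
    rw [if_neg (fun h => hll (h.1.symm.trans h.2)), mul_zero]

theorem Nat.cast_multinomial_option_elim {K σ : Type*} [Field K] [CharZero K] [Fintype σ]
    (l : σ → ℕ) {d : ℕ} (hl : ∑ k, l k ≤ d) :
    (Nat.multinomial univ (fun o : Option σ => o.elim (d - ∑ k, l k) l) : K)
      = d.factorial / ((d - ∑ k, l k).factorial * ∏ k, ((l k).factorial : K)) := by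
  have hspec := Nat.multinomial_spec univ fun o : Option σ => o.elim (d - ∑ k, l k) l
  simp only [Fintype.prod_option, Fintype.sum_option, Option.elim_none, Option.elim_some,
    Nat.sub_add_cancel hl] at hspec
  have hpos : (d - ∑ k, l k).factorial * ∏ k, (l k).factorial ≠ 0 := by positivity
  rw [eq_div_iff (by exact_mod_cast hpos), ← hspec]
  push_cast
  ring

theorem statement17_general (q d : ℕ) (hq : 2 ≤ q) :
    let θ₁ : ℂ := Complex.exp (2 * Real.pi * Complex.I / q)
    let Q : (Fin (q - 1) → ℕ) → (Fin q → ℕ) → ℂ := fun l m =>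
      MvPolynomial.coeff (Finsupp.equivFunOnFinite.symm l)
        (∏ j : Fin q, (1 + ∑ k : Fin (q - 1),
          MvPolynomial.X k * MvPolynomial.C (θ₁ ^ ((j : ℕ) * ((k : ℕ) + 1)))) ^ (m j))
    ∀ l l' : Fin (q - 1) → ℕ, (∑ k, l k) ≤ d → (∑ k, l' k) ≤ d →
      ∑ m ∈ Finset.Nat.antidiagonalTuple q d,
          ((Nat.multinomial Finset.univ m : ℂ) / (q : ℂ) ^ d)
            * Q l m * (starRingEnd ℂ) (Q l' m)
        = if l = l' then
            (d.factorial : ℂ) /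
              (((d - ∑ k, l k).factorial : ℂ) * ∏ k, ((l k).factorial : ℂ))
          else 0 := by
  obtain ⟨n, rfl⟩ : ∃ n, q = n + 1 := ⟨q - 1, by omega⟩
  rw [Nat.add_sub_cancel]
  intro θ Q l l' hl _
  have hθ : IsPrimitiveRoot θ (n + 1) := Complex.isPrimitiveRoot_exp _ n.succ_ne_zero
  have hconj : starRingEnd ℂ θ = θ⁻¹ :=
    (Complex.inv_eq_conj (hθ.norm'_eq_one n.succ_ne_zero)).symm
  set G : ℕ → MvPolynomial (Fin n ⊕ Fin n) ℂ := fun j =>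
    krawtchoukFactor θ (X ∘ Sum.inl) j * krawtchoukFactor θ⁻¹ (X ∘ Sum.inr) j
  set μ := (Finsupp.equivFunOnFinite.symm l).sumElim (Finsupp.equivFunOnFinite.symm l')
  have hQ (m : Fin (n + 1) → ℕ) :
      Q l m * starRingEnd ℂ (Q l' m) = coeff μ (∏ j : Fin (n + 1), G j ^ m j) := by
    simp only [Q, ← krawtchoukFactor_X]
    rw [coeff_prod_krawtchoukFactor_mul_map_coeff, hconj]
  have hμ : μ = Finsupp.equivFunOnFinite.symm (Sum.elim l l') := by ext (_ | _) <;> rfl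
  calc _ = ((n + 1 : ℂ) ^ d)⁻¹ * coeff μ ((∑ j : Fin (n + 1), G j) ^ d) := by
        rw [coeff_sum_pow, piAntidiag_univ_fin_eq_antidiagonalTuple, mul_sum]
        refine sum_congr rfl fun m _ => ?_
        rw [mul_assoc, hQ]
        push_cast
        ring
    _ = coeff μ ((1 + ∑ k, X (Sum.inl k) * X (Sum.inr k)) ^ d) := by
        rw [Fin.sum_univ_eq_sum_range G, hθ.sum_krawtchoukFactor_mul, smul_pow, coeff_smul,
          smul_eq_mul, inv_mul_cancel_left₀ (pow_ne_zero _ n.cast_add_one_ne_zero)]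
        rfl
    _ = _ := by
        rw [hμ, coeff_one_add_sum_X_inl_mul_X_inr_pow l l' hl,
          Nat.cast_multinomial_option_elim l hl]

/-- Orthogonality of the multivariate Krawtchouk polynomials `Q_l(m)` (the
coefficient of `w^l` in `Π_j (1 + Σ_k w_k θ₁^{jk})^{m_j}`) with respect to the uniform
multinomial distribution on counts of `d` symbols from `q` types:
`Σ_m (d choose m) q^{-d} Q_l(m) conj(Q_{l'}(m)) = 𝟙{l=l'} d!/((d−|l|)! l₁!⋯l_{q−1}!)`. -/
theorem statement17 (q d : ℕ) (hq : 2 ≤ q) (hd : 1 ≤ d) :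
    let θ₁ : ℂ := Complex.exp (2 * Real.pi * Complex.I / q)
    let Q : (Fin (q - 1) → ℕ) → (Fin q → ℕ) → ℂ := fun l m =>
      MvPolynomial.coeff (Finsupp.equivFunOnFinite.symm l)
        (∏ j : Fin q, (1 + ∑ k : Fin (q - 1),
          MvPolynomial.X k * MvPolynomial.C (θ₁ ^ ((j : ℕ) * ((k : ℕ) + 1)))) ^ (m j))
    ∀ l l' : Fin (q - 1) → ℕ, (∑ k, l k) ≤ d → (∑ k, l' k) ≤ d →
      ∑ m ∈ Finset.Nat.antidiagonalTuple q d,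
          ((Nat.multinomial Finset.univ m : ℂ) / (q : ℂ) ^ d)
            * Q l m * (starRingEnd ℂ) (Q l' m)
        = if l = l' then
            (d.factorial : ℂ) /
              (((d - ∑ k, l k).factorial : ℂ) * ∏ k, ((l k).factorial : ℂ))
          else 0 :=
  statement17_general q d hq
end
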